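/- Let P be a q-positive subset of an SSD space B. Then P is premaximally q-positive if and only if either Φ_P(b) ≥ q(b) for all b ∈ B, or P^π is an affine subset of B (i.e. x, y ∈ P^π and λ ∈ ℝ imply λx + (1 − λ)y ∈ P^π). -/

import Mathlib

/-!
`P` is premaximal exactly when `P^π` is `q`-positive, and then `P^π` is its unique maximal
extension. Each of the two conditions makes `P^π` `q`-positive: if `Φ_P ≥ q`, by comparing `Φ_P`
at the midpoint of `x, y ∈ P^π` with the average of `q(x)` and `q(y)`; if `P^π` is affine, because
`λ ↦ q(y - a + λ(x - y))` is a nonnegative quadratic with leading coefficient `q(x - y)`.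

Conversely, let `P^π` be `q`-positive and `Φ_P(b₀) < q(b₀)`, so that `q(b₀ - a) ≥ δ > 0` for all
`a ∈ P`. This slack keeps `b₀ + ε v` in `P^π` for small `ε > 0` whenever `v` is a nonnegative
combination of vectors `u - b₀` with `u ∈ P^π`. Writing `λx + (1 - λ)y - a` as a difference
`v₁ - v₂` of two such combinations, `q`-positivity of `P^π` gives
`0 ≤ q(ε v₁ - ε v₂) = ε² q(λx + (1 - λ)y - a)`.
-/

noncomputable section

variable {B : Type*} [AddCommGroup B] [Module ℝ B]

/-- The quadratic form `q(x) = ½⌊x,x⌋` associated to the bilinear form `br`. -/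
def qQ (br : B →ₗ[ℝ] B →ₗ[ℝ] ℝ) (x : B) : ℝ := (1 / 2) * br x x

/-- `A` is `q`-positive: nonempty and `q(b - c) ≥ 0` for all `b, c ∈ A`. -/
def IsQPositive (br : B →ₗ[ℝ] B →ₗ[ℝ] ℝ) (A : Set B) : Prop :=
  A.Nonempty ∧ ∀ b ∈ A, ∀ c ∈ A, 0 ≤ qQ br (b - c)

/-- `A^π`, the set of points `q`-positively related to `A`. -/
def qPi (br : B →ₗ[ℝ] B →ₗ[ℝ] ℝ) (A : Set B) : Set B :=
  {b : B | ∀ a ∈ A, 0 ≤ qQ br (b - a)}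

/-- `A` is maximally `q`-positive. -/
def IsMaxQPositive (br : B →ₗ[ℝ] B →ₗ[ℝ] ℝ) (A : Set B) : Prop :=
  IsQPositive br A ∧ ∀ C : Set B, IsQPositive br C → A ⊆ C → C = A

/-- The generalized Fitzpatrick function `Φ_A(x) = sup_{a ∈ A} (⌊x,a⌋ - q(a))`. -/
def PhiF (br : B →ₗ[ℝ] B →ₗ[ℝ] ℝ) (A : Set B) (x : B) : EReal :=
  ⨆ a ∈ A, ((br x a - qQ br a : ℝ) : EReal)

/-- The intrinsic conjugate `f^@(b) = sup_{c ∈ B} (⌊c,b⌋ - f(c))`. -/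
def intrinsicConj (br : B →ₗ[ℝ] B →ₗ[ℝ] ℝ) (f : B → EReal) (b : B) : EReal :=
  ⨆ c : B, ((br c b : ℝ) : EReal) - f c

/-- `P_q(f) = {b : f(b) = q(b)}`. -/
def PqSet (br : B →ₗ[ℝ] B →ₗ[ℝ] ℝ) (f : B → EReal) : Set B :=
  {b : B | f b = ((qQ br b : ℝ) : EReal)}

/-- `G_f = {b : f(b) + f^@(b) = ⌊b,b⌋}`. -/
def GSet (br : B →ₗ[ℝ] B →ₗ[ℝ] ℝ) (f : B → EReal) : Set B :=
  {b : B | f b + intrinsicConj br f b = ((br b b : ℝ) : EReal)}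

/-- Convexity for `ℝ ∪ {+∞}`-valued functions. -/
def ConvexE (f : B → EReal) : Prop :=
  ∀ x y : B, ∀ α β : ℝ, 0 ≤ α → 0 ≤ β → α + β = 1 →
    f (α • x + β • y) ≤ (α : EReal) * f x + (β : EReal) * f y

/-- The weak topology `w(B,B)` induced by the functionals `⌊·,b⌋`, `b ∈ B`. -/
def weakTop (br : B →ₗ[ℝ] B →ₗ[ℝ] ℝ) : TopologicalSpace B :=
  ⨅ b : B, TopologicalSpace.induced (fun x => br x b) inferInstance

/-- Lower semicontinuity with respect to the weak topology `w(B,B)`. -/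
def LscW (br : B →ₗ[ℝ] B →ₗ[ℝ] ℝ) (f : B → EReal) : Prop :=
  @LowerSemicontinuous B EReal (weakTop br) _ f

/-- `A` is `q`-representable: it has a `w(B,B)`-lsc proper convex `q`-representation. -/
def IsQRepresentable (br : B →ₗ[ℝ] B →ₗ[ℝ] ℝ) (A : Set B) : Prop :=
  ∃ f : B → EReal, LscW br f ∧ ConvexE f ∧ (∃ x, f x ≠ ⊤) ∧
    (∀ x, ((qQ br x : ℝ) : EReal) ≤ f x) ∧ PqSet br f = A

open Filter Topology

section QuadraticForm

variable (br : B →ₗ[ℝ] B →ₗ[ℝ] ℝ)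

theorem qQ_sub_comm (u v : B) : qQ br (u - v) = qQ br (v - u) := by
  simp only [qQ, map_sub, LinearMap.sub_apply]
  ring

theorem qQ_smul (c : ℝ) (v : B) : qQ br (c • v) = c ^ 2 * qQ br v := by
  simp only [qQ, map_smul, LinearMap.smul_apply, smul_eq_mul]
  ring

variable {br}

theorem qQ_add_smul (hsym : ∀ x y : B, br x y = br y x) (u v : B) (c : ℝ) :
    qQ br (u + c • v) = qQ br u + c * br u v + c ^ 2 * qQ br v := by
  simp only [qQ, map_add, map_smul, LinearMap.add_apply, LinearMap.smul_apply, smul_eq_mul,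
    hsym v u]
  ring

theorem qQ_add (hsym : ∀ x y : B, br x y = br y x) (u v : B) :
    qQ br (u + v) = qQ br u + br u v + qQ br v := by
  simpa using qQ_add_smul hsym u v 1

theorem qQ_sub (hsym : ∀ x y : B, br x y = br y x) (u v : B) :
    qQ br (u - v) = qQ br u - br u v + qQ br v := by
  simpa [sub_eq_add_neg] using qQ_add_smul hsym u v (-1)

end QuadraticForm

section

variable {br : B →ₗ[ℝ] B →ₗ[ℝ] ℝ} {P : Set B}

theorem IsQPositive.subset_qPi (hP : IsQPositive br P) : P ⊆ qPi br P :=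
  fun a ha => hP.2 a ha

theorem IsQPositive.qPi_nonempty (hP : IsQPositive br P) : (qPi br P).Nonempty :=
  hP.1.mono hP.subset_qPi

theorem IsQPositive.insert_of_mem_qPi (hP : IsQPositive br P) {b : B} (hb : b ∈ qPi br P) :
    IsQPositive br (insert b P) := by
  refine ⟨Set.insert_nonempty b P, ?_⟩
  rintro c (rfl | hc) d (rfl | hd)
  · simp [qQ]
  · exact hb d hd
  · rw [qQ_sub_comm]
    exact hb c hc
  · exact hP.2 c hc d hd

theorem IsQPositive.exists_isMaxQPositive_superset (hP : IsQPositive br P) :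
    ∃ M, IsMaxQPositive br M ∧ P ⊆ M := by
  obtain ⟨M, hPM, hM⟩ := zorn_subset_nonempty {C | IsQPositive br C}
    (fun c hc hchain ⟨C, hC⟩ => by
      refine ⟨⋃₀ c, ⟨(hc hC).1.mono (Set.subset_sUnion_of_mem hC), ?_⟩,
        fun s hs => Set.subset_sUnion_of_mem hs⟩
      rintro b ⟨C₁, hC₁, hb⟩ d ⟨C₂, hC₂, hd⟩
      rcases hchain.total hC₁ hC₂ with h | h
      · exact (hc hC₂).2 b (h hb) d hd
      · exact (hc hC₁).2 b hb d (h hd))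
    P hP
  exact ⟨M, ⟨hM.prop, fun C hC hMC => (hM.eq_of_subset hC hMC).symm⟩, hPM⟩

theorem IsMaxQPositive.subset_qPi {M : Set B} (hM : IsMaxQPositive br M) (hPM : P ⊆ M) :
    M ⊆ qPi br P :=
  fun m hm a ha => hM.1.2 m hm a (hPM ha)

theorem existsUnique_isMaxQPositive_iff (hP : IsQPositive br P) :
    (∃! M : Set B, IsMaxQPositive br M ∧ P ⊆ M) ↔ IsQPositive br (qPi br P) := by
  constructor
  · rintro ⟨M, ⟨hM, hPM⟩, huniq⟩
    have hqPi : qPi br P ⊆ M := fun b hb => by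
      obtain ⟨M', hM', hbM'⟩ := (hP.insert_of_mem_qPi hb).exists_isMaxQPositive_superset
      rw [← huniq M' ⟨hM', (Set.subset_insert b P).trans hbM'⟩]
      exact hbM' (Set.mem_insert b P)
    exact ⟨hP.qPi_nonempty, fun x hx y hy => hM.1.2 x (hqPi hx) y (hqPi hy)⟩
  · intro hpi
    have hmax : IsMaxQPositive br (qPi br P) :=
      ⟨hpi, fun C hC hC' =>
        Set.Subset.antisymm (fun c hc a ha => hC.2 c hc a (hC' (hP.subset_qPi ha))) hC'⟩
    exact ⟨qPi br P, ⟨hmax, hP.subset_qPi⟩, fun M ⟨hM, hPM⟩ =>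
      (hM.2 _ hpi (hM.subset_qPi hPM)).symm⟩

theorem br_sub_qQ_le_of_mem_qPi (hsym : ∀ x y : B, br x y = br y x) {x a : B}
    (hx : x ∈ qPi br P) (ha : a ∈ P) : br x a - qQ br a ≤ qQ br x := by
  have := hx a ha
  rw [qQ_sub hsym] at this
  linarith

theorem isQPositive_qPi_of_forall_le_PhiF (hsym : ∀ x y : B, br x y = br y x)
    (hP : IsQPositive br P) (h : ∀ b : B, ((qQ br b : ℝ) : EReal) ≤ PhiF br P b) :
    IsQPositive br (qPi br P) := by
  refine ⟨hP.qPi_nonempty, fun x hx y hy => ?_⟩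
  set m : B := (1 / 2 : ℝ) • (x + y)
  have hPhi : PhiF br P m ≤ (((qQ br x + qQ br y) / 2 : ℝ) : EReal) := by
    refine iSup₂_le fun a ha => EReal.coe_le_coe_iff.2 ?_
    have hxa := br_sub_qQ_le_of_mem_qPi hsym hx ha
    have hya := br_sub_qQ_le_of_mem_qPi hsym hy ha
    simp only [m, map_smul, map_add, LinearMap.smul_apply, LinearMap.add_apply, smul_eq_mul]
    linarith
  have hm : qQ br m ≤ (qQ br x + qQ br y) / 2 := EReal.coe_le_coe_iff.1 ((h m).trans hPhi)
  rw [qQ_smul, qQ_add hsym] at hm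
  rw [qQ_sub hsym]
  linarith

theorem nonneg_of_forall_quadratic_nonneg {a b c : ℝ} (h : ∀ t : ℝ, 0 ≤ c + t * b + t ^ 2 * a) :
    0 ≤ a := by
  by_contra! ha
  have hdisc := discrim_le_zero (a := a) (b := b) (c := c) fun t => by linarith [h t]
  rw [discrim] at hdisc
  nlinarith [h 0, h 1, h (-1), sq_nonneg b]

theorem isQPositive_qPi_of_affine (hsym : ∀ x y : B, br x y = br y x) (hP : IsQPositive br P)
    (h : ∀ x ∈ qPi br P, ∀ y ∈ qPi br P, ∀ lam : ℝ, lam • x + (1 - lam) • y ∈ qPi br P) :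
    IsQPositive br (qPi br P) := by
  refine ⟨hP.qPi_nonempty, fun x hx y hy => ?_⟩
  obtain ⟨a, ha⟩ := hP.1
  refine nonneg_of_forall_quadratic_nonneg (b := br (y - a) (x - y)) (c := qQ br (y - a))
    fun t => ?_
  have hline := h x hx y hy t a ha
  rwa [show t • x + (1 - t) • y - a = (y - a) + t • (x - y) by module, qQ_add_smul hsym] at hline

theorem exists_pos_le_qQ_sub_of_PhiF_lt (hsym : ∀ x y : B, br x y = br y x) {b₀ : B}
    (h : PhiF br P b₀ < ((qQ br b₀ : ℝ) : EReal)) :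
    ∃ δ : ℝ, 0 < δ ∧ ∀ a ∈ P, δ ≤ qQ br (b₀ - a) := by
  obtain ⟨r, hΦr, hrq⟩ := EReal.exists_between_coe_real h
  refine ⟨qQ br b₀ - r, by linarith [EReal.coe_lt_coe_iff.1 hrq], fun a ha => ?_⟩
  have hterm : br b₀ a - qQ br a < r :=
    EReal.coe_lt_coe_iff.1 ((le_biSup (fun a => ((br b₀ a - qQ br a : ℝ) : EReal)) ha).trans_lt hΦr)
  rw [qQ_sub hsym]
  linarith

/-- Moving from `b₀` in direction `v` changes `q(· - a)` to first order by `⌊b₀ - a, v⌋`; a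
direction is admissible when this is bounded below uniformly in `a ∈ P` in terms of
`q(b₀ - a)`. -/
def IsAdmissibleDirection (br : B →ₗ[ℝ] B →ₗ[ℝ] ℝ) (P : Set B) (b₀ v : B) : Prop :=
  ∃ C D : ℝ, ∀ a ∈ P, -(C * qQ br (b₀ - a)) - D ≤ br (b₀ - a) v

variable {b₀ : B}

theorem IsAdmissibleDirection.add {v w : B} (hv : IsAdmissibleDirection br P b₀ v)
    (hw : IsAdmissibleDirection br P b₀ w) : IsAdmissibleDirection br P b₀ (v + w) := by
  obtain ⟨C, D, hv⟩ := hv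
  obtain ⟨C', D', hw⟩ := hw
  refine ⟨C + C', D + D', fun a ha => ?_⟩
  linarith [hv a ha, hw a ha, map_add (br (b₀ - a)) v w]

theorem IsAdmissibleDirection.smul {v : B} (hv : IsAdmissibleDirection br P b₀ v) {c : ℝ}
    (hc : 0 ≤ c) : IsAdmissibleDirection br P b₀ (c • v) := by
  obtain ⟨C, D, hv⟩ := hv
  refine ⟨c * C, c * D, fun a ha => ?_⟩
  rw [map_smul, smul_eq_mul]
  nlinarith [mul_le_mul_of_nonneg_left (hv a ha) hc]

theorem isAdmissibleDirection_sub_of_mem_qPi (hsym : ∀ x y : B, br x y = br y x) {u : B}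
    (hu : u ∈ qPi br P) : IsAdmissibleDirection br P b₀ (u - b₀) := by
  refine ⟨1, qQ br (u - b₀), fun a ha => ?_⟩
  have hua := hu a ha
  rw [show u - a = (b₀ - a) + (u - b₀) by abel, qQ_add hsym] at hua
  linarith

theorem IsAdmissibleDirection.eventually_mem_qPi (hsym : ∀ x y : B, br x y = br y x) {v : B}
    (hv : IsAdmissibleDirection br P b₀ v) {δ : ℝ} (hδ : 0 < δ)
    (hb₀ : ∀ a ∈ P, δ ≤ qQ br (b₀ - a)) :
    ∀ᶠ ε in 𝓝[>] (0 : ℝ), b₀ + ε • v ∈ qPi br P := by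
  obtain ⟨C, D, hv⟩ := hv
  have hsmall : ∀ᶠ ε in 𝓝 (0 : ℝ),
      0 < 1 - ε * C ∧ 0 < (1 - ε * C) * δ - ε * D + ε ^ 2 * qQ br v :=
    (continuousAt_const.eventually_lt (by fun_prop) (by simp)).and
      (continuousAt_const.eventually_lt (by fun_prop) (by simpa using hδ))
  filter_upwards [nhdsWithin_le_nhds hsmall, self_mem_nhdsWithin] with ε ⟨hC, hpos⟩ hε a ha
  rw [show b₀ + ε • v - a = (b₀ - a) + ε • v by abel, qQ_add_smul hsym]
  nlinarith [mul_le_mul_of_nonneg_left (hv a ha) hε.le,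
    mul_le_mul_of_nonneg_left (hb₀ a ha) hC.le]

theorem affine_qPi_of_margin (hsym : ∀ x y : B, br x y = br y x) (hP : IsQPositive br P)
    (hpi : IsQPositive br (qPi br P)) {δ : ℝ} (hδ : 0 < δ) (hb₀ : ∀ a ∈ P, δ ≤ qQ br (b₀ - a)) :
    ∀ x ∈ qPi br P, ∀ y ∈ qPi br P, ∀ lam : ℝ, lam • x + (1 - lam) • y ∈ qPi br P := by
  intro x hx y hy lam a ha
  have hdir {u : B} (hu : u ∈ qPi br P) : IsAdmissibleDirection br P b₀ (u - b₀) :=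
    isAdmissibleDirection_sub_of_mem_qPi hsym hu
  have hv₁ := ((hdir hx).smul (abs_nonneg lam)).add ((hdir hy).smul (abs_nonneg (1 - lam)))
  have hv₂ := (((hdir hx).smul (sub_nonneg.2 (le_abs_self lam))).add
    ((hdir hy).smul (sub_nonneg.2 (le_abs_self (1 - lam))))).add (hdir (hP.subset_qPi ha))
  obtain ⟨ε, ⟨hp₁, hp₂⟩, hε⟩ := (((hv₁.eventually_mem_qPi hsym hδ hb₀).and
    (hv₂.eventually_mem_qPi hsym hδ hb₀)).and self_mem_nhdsWithin).exists
  have hq := hpi.2 _ hp₁ _ hp₂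
  rw [show ∀ p₁ p₂ : B, b₀ + ε • p₁ - (b₀ + ε • p₂) = ε • (p₁ - p₂) by intros; module,
    show _ - _ = lam • x + (1 - lam) • y - a by module, qQ_smul] at hq
  exact nonneg_of_mul_nonneg_right hq (by positivity)

end

theorem stmt17_general (br : B →ₗ[ℝ] B →ₗ[ℝ] ℝ)
    (hsym : ∀ x y : B, br x y = br y x)
    (P : Set B) (hP : IsQPositive br P) :
    (∃! M : Set B, IsMaxQPositive br M ∧ P ⊆ M) ↔
      ((∀ b : B, ((qQ br b : ℝ) : EReal) ≤ PhiF br P b) ∨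
       (∀ x ∈ qPi br P, ∀ y ∈ qPi br P, ∀ lam : ℝ,
          lam • x + (1 - lam) • y ∈ qPi br P)) := by
  rw [existsUnique_isMaxQPositive_iff hP]
  constructor
  · intro hpi
    refine or_iff_not_imp_left.2 fun hΦ => ?_
    obtain ⟨b₀, hb₀⟩ := not_forall.1 hΦ
    obtain ⟨δ, hδ, hmargin⟩ := exists_pos_le_qQ_sub_of_PhiF_lt hsym (not_le.1 hb₀)
    exact affine_qPi_of_margin hsym hP hpi hδ hmargin
  · rintro (hΦ | haff)
    · exact isQPositive_qPi_of_forall_le_PhiF hsym hP hΦ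
    · exact isQPositive_qPi_of_affine hsym hP haff

/-- P is premaximally q-positive iff either Φ_P ≥ q on B
or P^π is affine. -/
theorem stmt17 [Nontrivial B] (br : B →ₗ[ℝ] B →ₗ[ℝ] ℝ)
    (hsym : ∀ x y : B, br x y = br y x)
    (P : Set B) (hP : IsQPositive br P) :
    (∃! M : Set B, IsMaxQPositive br M ∧ P ⊆ M) ↔
      ((∀ b : B, ((qQ br b : ℝ) : EReal) ≤ PhiF br P b) ∨
       (∀ x ∈ qPi br P, ∀ y ∈ qPi br P, ∀ lam : ℝ,
          lam • x + (1 - lam) • y ∈ qPi br P)) :=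
  stmt17_general br hsym P hP
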